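/- arXiv:1906.05100 — 4 statements merged into one kernel-verified Lean document; each statement's English description precedes it below -/
import Mathlib

section
/- Let Γ be an (n,d,λ)-graph and let k ≥ 1 be an integer. Then | h_{C_{2k+1}}(Γ) − d^{2k+1} | ≤ λ · h_{C_{2k}}(Γ). -/
open Finset SimpleGraph

/-- `Γ` is an `(n,d,λ)`-graph on its vertex type `V` (with `n = Fintype.card V` as a
separate hypothesis): `Γ` is `d`-regular and all eigenvalues of its adjacency matrix,
except one eigenvalue equal to `d`, have absolute value at most `lam`. -/
def IsNDLGraph {V : Type} [Fintype V] [DecidableEq V] (Γ : SimpleGraph V)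
    [DecidableRel Γ.Adj] (d : ℕ) (lam : ℝ) : Prop :=
  Γ.IsRegularOfDegree d ∧
    ∃ (hA : (Γ.adjMatrix ℝ).IsHermitian) (i₀ : V),
      hA.eigenvalues i₀ = d ∧ ∀ i : V, i ≠ i₀ → |hA.eigenvalues i| ≤ lam

/-- `h_H(G)`: the number of homomorphisms from `H` to `G`. -/
noncomputable def homCount {W V : Type} (H : SimpleGraph W) (G : SimpleGraph V) : ℕ :=
  Nat.card (H →g G)

/-!
A homomorphism from the cycle `C_m` (`m ≥ 2`) is a closed walk of length `m`, so
`h_{C_m}(Γ) = tr A^m = ∑ᵢ μᵢ^m` for the eigenvalues `μᵢ` of the adjacency matrix `A`.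
Removing the eigenvalue `μ_{i₀} = d`, every other term obeys `|μᵢ|^{2k+1} ≤ λ μᵢ^{2k}` since
`2k` is even, and `∑_{i ≠ i₀} μᵢ^{2k} ≤ h_{C_{2k}}(Γ)`. The last step needs `λ ≥ 0`, which can
only fail when `Γ` has a single vertex, and then `d = 0`.
-/

theorem Fin.snoc_apply_zero_succ {α : Type*} {m : ℕ} (g : Fin (m + 1) → α) (i : Fin (m + 1)) :
    Fin.snoc (α := fun _ => α) g (g 0) i.succ = g (i + 1) := by
  induction i using Fin.lastCases with
  | last => simp
  | cast j => rw [Fin.succ_castSucc, Fin.snoc_castSucc, Fin.coeSucc_eq_succ]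

namespace Matrix

theorem IsHermitian.trace_pow_eq_sum_eigenvalues_pow {𝕜 V : Type*} [RCLike 𝕜] [Fintype V]
    [DecidableEq V] {A : Matrix V V 𝕜} (hA : A.IsHermitian) (m : ℕ) :
    (A ^ m).trace = ∑ i, (hA.eigenvalues i : 𝕜) ^ m := by
  conv_lhs => rw [hA.spectral_theorem, ← map_pow, Unitary.conjStarAlgAut_apply, trace_mul_cycle,
    Unitary.coe_star_mul_self, one_mul, diagonal_pow, trace_diagonal]
  simp

variable {R V : Type*} [CommSemiring R]

def walkWeight (M : Matrix V V R) {m : ℕ} (p : Fin (m + 1) → V) : R :=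
  ∏ i : Fin m, M (p i.castSucc) (p i.succ)

theorem walkWeight_snoc (M : Matrix V V R) {m : ℕ} (p : Fin (m + 1) → V) (v : V) :
    M.walkWeight (Fin.snoc p v : Fin (m + 2) → V) = M.walkWeight p * M (p (Fin.last m)) v := by
  simp only [walkWeight, Fin.prod_univ_castSucc, Fin.snoc_castSucc, Fin.succ_castSucc,
    Fin.snoc_last, Fin.succ_last]

theorem pow_succ_apply_eq_sum_walkWeight [Fintype V] [DecidableEq V] (M : Matrix V V R)
    (m : ℕ) (u v : V) :
    (M ^ (m + 1)) u v =
      ∑ f : Fin m → V, M.walkWeight (Fin.cons u (Fin.snoc f v) : Fin (m + 2) → V) := by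
  induction m generalizing v with
  | zero => simp [walkWeight]; rfl
  | succ m ih =>
    rw [pow_succ, mul_apply, ← (Fin.snocEquiv fun _ => V).sum_comp, Fintype.sum_prod_type]
    refine sum_congr rfl fun x _ => ?_
    rw [ih, sum_mul]
    refine sum_congr rfl fun f _ => ?_
    change _ = M.walkWeight (Fin.cons u (Fin.snoc (Fin.snoc f x) v) : Fin (m + 3) → V)
    rw [Fin.cons_snoc_eq_snoc_cons u (Fin.snoc f x : Fin (m + 1) → V), walkWeight_snoc,
      ← Fin.succ_last, Fin.cons_succ, Fin.snoc_last]

theorem trace_pow_succ_eq_sum_prod [Fintype V] [DecidableEq V] (M : Matrix V V R) (m : ℕ) :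
    (M ^ (m + 1)).trace = ∑ g : Fin (m + 1) → V, ∏ i, M (g i) (g (i + 1)) := by
  rw [← (Fin.consEquiv fun _ => V).sum_comp, Fintype.sum_prod_type, trace]
  refine sum_congr rfl fun u _ => ?_
  rw [diag_apply, pow_succ_apply_eq_sum_walkWeight]
  refine sum_congr rfl fun f _ => ?_
  change _ = ∏ i, M ((Fin.cons u f : Fin (m + 1) → V) i) ((Fin.cons u f : Fin (m + 1) → V) (i + 1))
  rw [Fin.cons_snoc_eq_snoc_cons, walkWeight]
  refine prod_congr rfl fun i _ => ?_
  rw [Fin.snoc_castSucc, ← Fin.snoc_apply_zero_succ (Fin.cons u f : Fin (m + 1) → V),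
    Fin.cons_zero]

end Matrix

namespace SimpleGraph

variable {V : Type}

def cycleGraphHomEquiv (G : SimpleGraph V) (m : ℕ) :
    (cycleGraph (m + 2) →g G) ≃ {g : Fin (m + 2) → V // ∀ i, G.Adj (g i) (g (i + 1))} where
  toFun φ := ⟨φ, fun i => φ.map_adj <| cycleGraph_adj.mpr <| .inr (add_sub_cancel_left i 1)⟩
  invFun g := ⟨g.1, fun {a b} hab => by
    rcases cycleGraph_adj.mp hab with h | h
    · rw [sub_eq_iff_eq_add'.mp h]
      exact (g.2 b).symm
    · rw [sub_eq_iff_eq_add'.mp h]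
      exact g.2 a⟩

theorem homCount_cycleGraph_eq_trace_adjMatrix_pow {R : Type*} [CommSemiring R] [Fintype V]
    [DecidableEq V] (G : SimpleGraph V) [DecidableRel G.Adj] (m : ℕ) :
    (homCount (cycleGraph (m + 2)) G : R) = ((G.adjMatrix R) ^ (m + 2)).trace := by
  have hprod (g : Fin (m + 2) → V) : ∏ i, G.adjMatrix R (g i) (g (i + 1)) =
      if ∀ i, G.Adj (g i) (g (i + 1)) then 1 else 0 := by
    simp only [adjMatrix_apply, prod_boole, mem_univ, true_implies]
  rw [Matrix.trace_pow_succ_eq_sum_prod, sum_congr rfl fun g _ => hprod g,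
    sum_boole, homCount, Nat.card_congr (G.cycleGraphHomEquiv m),
    Nat.card_eq_fintype_card, Fintype.card_subtype]

end SimpleGraph

theorem abs_sum_pow_succ_sub_le {ι : Type*} [Fintype ι] [DecidableEq ι] (μ : ι → ℝ) (i₀ : ι)
    {lam : ℝ} (hμ : ∀ i ≠ i₀, |μ i| ≤ lam) {m : ℕ} (hm : Even m) :
    |∑ i, μ i ^ (m + 1) - μ i₀ ^ (m + 1)| ≤ lam * (∑ i, μ i ^ m - μ i₀ ^ m) := by
  rw [← sum_erase_eq_sub (mem_univ i₀), ← sum_erase_eq_sub (mem_univ i₀), mul_sum]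
  refine (abs_sum_le_sum_abs _ _).trans (sum_le_sum fun i hi => ?_)
  rw [pow_succ, abs_mul, abs_of_nonneg (hm.pow_nonneg _), mul_comm]
  exact mul_le_mul_of_nonneg_right (hμ i (ne_of_mem_erase hi)) (hm.pow_nonneg _)

theorem IsNDLGraph.zero_le_or_eq_zero {V : Type} [Fintype V] [DecidableEq V] {Γ : SimpleGraph V}
    [DecidableRel Γ.Adj] {d : ℕ} {lam : ℝ} (hΓ : IsNDLGraph Γ d lam) : 0 ≤ lam ∨ d = 0 := by
  obtain ⟨hreg, _, i₀, -, hbound⟩ := hΓ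
  by_cases h : ∃ i, i ≠ i₀
  · obtain ⟨i, hi⟩ := h
    exact .inl ((abs_nonneg _).trans (hbound i hi))
  · push Not at h
    have hcard : Fintype.card V ≤ 1 :=
      Fintype.card_le_one_iff.mpr fun a b => (h a).trans (h b).symm
    have := hreg i₀ ▸ Γ.degree_lt_card_verts i₀
    exact .inr (by omega)

theorem oddcycle_hom_estimate_general (V : Type) [Fintype V] [DecidableEq V]
    (Γ : SimpleGraph V) [DecidableRel Γ.Adj] (d : ℕ) (lam : ℝ)
    (hΓ : IsNDLGraph Γ d lam) (k : ℕ) (hk : 1 ≤ k) :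
    |(homCount (cycleGraph (2 * k + 1)) Γ : ℝ) - (d : ℝ) ^ (2 * k + 1)| ≤
      lam * (homCount (cycleGraph (2 * k)) Γ : ℝ) := by
  have hsign := hΓ.zero_le_or_eq_zero
  obtain ⟨-, hA, i₀, hi₀, hbound⟩ := hΓ
  have hcount (m : ℕ) (hm : 2 ≤ m) :
      (homCount (cycleGraph m) Γ : ℝ) = ∑ i, hA.eigenvalues i ^ m := by
    obtain ⟨m, rfl⟩ := Nat.exists_eq_add_of_le' hm
    rw [Γ.homCount_cycleGraph_eq_trace_adjMatrix_pow, hA.trace_pow_eq_sum_eigenvalues_pow]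
    simp
  have heven : Even (2 * k) := even_two_mul k
  rw [hcount _ (by omega), hcount _ (by omega), ← hi₀]
  calc _ ≤ lam * (∑ i, hA.eigenvalues i ^ (2 * k) - hA.eigenvalues i₀ ^ (2 * k)) :=
        abs_sum_pow_succ_sub_le _ i₀ hbound heven
    _ ≤ lam * ∑ i, hA.eigenvalues i ^ (2 * k) := by
        rcases hsign with hlam | hd
        · exact mul_le_mul_of_nonneg_left (sub_le_self _ (heven.pow_nonneg _)) hlam
        · simp [hi₀, hd, show k ≠ 0 by omega]

/-- Inequality (2.2): the homomorphism count of odd cycles in an `(n,d,λ)`-graph. -/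
theorem oddcycle_hom_estimate (V : Type) [Fintype V] [DecidableEq V]
    (Γ : SimpleGraph V) [DecidableRel Γ.Adj] (n d : ℕ) (lam : ℝ)
    (hn : Fintype.card V = n) (hΓ : IsNDLGraph Γ d lam) (k : ℕ) (hk : 1 ≤ k) :
    |(homCount (cycleGraph (2 * k + 1)) Γ : ℝ) - (d : ℝ) ^ (2 * k + 1)| ≤
      lam * (homCount (cycleGraph (2 * k)) Γ : ℝ) :=
  oddcycle_hom_estimate_general V Γ d lam hΓ k hk
end

section
/- Let Γ be an (n,d,λ)-graph, let q ≥ 1 and r ≥ 1 be integers, and let H be the graph consisting of an edge-disjoint cycle C_{2q} and cycle C_{2r+1} sharing exactly one vertex. Then h_H(Γ) ≤ d^{2(q+r)+1}/n + λ^{2q−2}·d^{2r+2} + λ·d^{2(q+r)} + λ^{2(q+r)−1}·d·n. -/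
open Finset SimpleGraph

/-- Relabelling of the vertices of the second cycle: the cycle `C_{2r+1}` uses the vertices
`0, 2q, 2q+1, …, 2q+2r-1` (sharing only the vertex `0` with the first cycle `C_{2q}`). -/
def embC (q i : ℕ) : ℕ := if i = 0 then 0 else 2 * q + i - 1

/-- The graph consisting of an edge-disjoint cycle `C_{2q}` (on the vertices `0,…,2q-1`) and an
odd cycle `C_{2r+1}` (on the vertices `0, 2q, …, 2q+2r-1`) sharing exactly the vertex `0`. -/
def gluedCycles (q r : ℕ) : SimpleGraph (Fin (2 * q + 2 * r)) :=
  SimpleGraph.fromRel (fun a b =>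
    (∃ i : ℕ, i < 2 * q ∧ a.val = i ∧ b.val = (i + 1) % (2 * q)) ∨
    (∃ i : ℕ, i < 2 * r + 1 ∧ a.val = embC q i ∧ b.val = embC q ((i + 1) % (2 * r + 1))))

/-!
A homomorphism from `gluedCycles q r` is determined by the images of a closed walk of length `2q`
and one of length `2r+1` through the shared vertex, so `h_H(Γ) ≤ ∑ᵥ (A^{2q})ᵥᵥ (A^{2r+1})ᵥᵥ`.
Spectrally `(A^m)ᵥᵥ = ∑ᵢ μᵢ^m uᵢ(v)²`. If `λ < d`, the eigenvalue `d` is simple and its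
eigenvector is constant, so splitting it off leaves the main term `d^{2(q+r)+1}/n`, two cross terms
controlled by `∑_{i ≠ i₀} μᵢ^m ≤ λ^{m-2} ∑ᵢ μᵢ² = λ^{m-2} n d`, and a remainder bounded by
Cauchy–Schwarz, using `∑ᵥ (∑_{i ∈ I} aᵢ uᵢ(v)²)² ≤ ∑_{i ∈ I} aᵢ²`. If `λ ≥ d`, the same
Cauchy–Schwarz bound over all eigenvalues already gives the last term.
-/

theorem Nat.add_one_mod_of_lt {i m : ℕ} (hi : i < m) :
    (i + 1) % m = if i + 1 = m then 0 else i + 1 := by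
  split_ifs with h
  · rw [h, Nat.mod_self]
  · exact Nat.mod_eq_of_lt (by omega)

theorem Finset.abs_sum_pow_le_mul_sum_sq {ι : Type*} (s : Finset ι) (x : ι → ℝ) {lam : ℝ}
    (hx : ∀ i ∈ s, |x i| ≤ lam) {e : ℕ} (he : 2 ≤ e) :
    |∑ i ∈ s, x i ^ e| ≤ lam ^ (e - 2) * ∑ i ∈ s, x i ^ 2 := by
  calc |∑ i ∈ s, x i ^ e| ≤ ∑ i ∈ s, |x i| ^ (e - 2) * x i ^ 2 := by
        refine (abs_sum_le_sum_abs _ _).trans_eq (sum_congr rfl fun i _ => ?_)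
        rw [abs_pow, ← sq_abs (x i), ← pow_add, Nat.sub_add_cancel he]
    _ ≤ ∑ i ∈ s, lam ^ (e - 2) * x i ^ 2 :=
        sum_le_sum fun i hi => by gcongr; exact hx i hi
    _ = lam ^ (e - 2) * ∑ i ∈ s, x i ^ 2 := (mul_sum _ _ _).symm

theorem Finset.sq_sum_mul_le_sum_sq_mul {ι : Type*} (s : Finset ι) (a : ι → ℝ) {w : ι → ℝ}
    (hw : ∀ i ∈ s, 0 ≤ w i) (hw₁ : ∑ i ∈ s, w i ≤ 1) :
    (∑ i ∈ s, a i * w i) ^ 2 ≤ ∑ i ∈ s, a i ^ 2 * w i :=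
  (sum_sq_le_sum_mul_sum_of_sq_le_mul s (fun i hi => mul_nonneg (sq_nonneg _) (hw i hi)) hw
    fun i _ => by rw [mul_pow, sq (w i), mul_assoc]).trans
    (mul_le_of_le_one_right (sum_nonneg fun i hi => mul_nonneg (sq_nonneg _) (hw i hi)) hw₁)

namespace SimpleGraph

theorem exists_walk_of_adj_succ {V : Type*} {G : SimpleGraph V} (f : ℕ → V) :
    ∀ m, (∀ i < m, G.Adj (f i) (f (i + 1))) →
      ∃ p : G.Walk (f 0) (f m), p.length = m ∧ ∀ i ≤ m, f i ∈ p.support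
  | 0, _ => ⟨.nil, rfl, fun i hi => by simp [Nat.le_zero.mp hi]⟩
  | m + 1, h => by
    obtain ⟨p, hlen, hsupp⟩ := exists_walk_of_adj_succ f m fun i hi => h i (by omega)
    refine ⟨p.concat (h m (by omega)), by simp [hlen], fun i hi => ?_⟩
    rw [Walk.support_concat, List.mem_append, List.mem_singleton]
    rcases Nat.lt_or_ge i (m + 1) with hi' | hi'
    · exact .inl (hsupp i (by omega))
    · exact .inr (by rw [show i = m + 1 by omega])

end SimpleGraph

theorem homCount_eq_zero_of_adj {W V : Type} {H : SimpleGraph W} {G : SimpleGraph V} {a b : W}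
    (hab : H.Adj a b) (hG : ∀ x y, ¬G.Adj x y) : homCount H G = 0 :=
  Nat.card_eq_zero.mpr (.inl ⟨fun f => hG _ _ (f.map_adj hab)⟩)

theorem homCount_le_sum_adjMatrix_pow_mul {W V : Type} [Fintype V] [DecidableEq V]
    {H : SimpleGraph W} (G : SimpleGraph V) [DecidableRel G.Adj] {x : W} (p₁ p₂ : H.Walk x x)
    (hcover : ∀ w, w ∈ p₁.support ∨ w ∈ p₂.support) :
    (homCount H G : ℝ) ≤
      ∑ v, (G.adjMatrix ℝ ^ p₁.length) v v * (G.adjMatrix ℝ ^ p₂.length) v v := by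
  let walks (ℓ : ℕ) (v : V) := {p : G.Walk v v | p.length = ℓ}
  let F (f : H →g G) : Σ v, walks p₁.length v × walks p₂.length v :=
    ⟨f x, ⟨p₁.map f, Walk.length_map _ _⟩, ⟨p₂.map f, Walk.length_map _ _⟩⟩
  have hF : Function.Injective F := by
    intro f g hfg
    have h₁ := congrArg (fun s => s.2.1.1.support) hfg
    have h₂ := congrArg (fun s => s.2.2.1.support) hfg
    simp only [F, Walk.support_map, List.map_inj_left] at h₁ h₂
    exact RelHom.ext fun w => (hcover w).elim (h₁ w) (h₂ w)
  calc (homCount H G : ℝ) ≤ Nat.card (Σ v, walks p₁.length v × walks p₂.length v) := by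
        exact_mod_cast Nat.card_le_card_of_injective F hF
    _ = _ := by
        simp only [walks, Nat.card_eq_fintype_card, Fintype.card_sigma, Fintype.card_prod,
          adjMatrix_pow_apply_eq_card_walk, Nat.cast_sum, Nat.cast_mul]

theorem exists_covering_closed_walks_gluedCycles {q r : ℕ} (hq : 1 ≤ q) (hr : 1 ≤ r) :
    ∃ (x : Fin (2 * q + 2 * r)) (p₁ p₂ : (gluedCycles q r).Walk x x),
      p₁.length = 2 * q ∧ p₂.length = 2 * r + 1 ∧ ∀ w, w ∈ p₁.support ∨ w ∈ p₂.support := by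
  let f₁ (i : ℕ) : Fin (2 * q + 2 * r) :=
    ⟨i % (2 * q), by have := Nat.mod_lt i (by omega : 0 < 2 * q); omega⟩
  let f₂ (i : ℕ) : Fin (2 * q + 2 * r) :=
    ⟨embC q (i % (2 * r + 1)), by have := Nat.mod_lt i (by omega : 0 < 2 * r + 1); grind [embC]⟩
  have adj₁ : ∀ i < 2 * q, (gluedCycles q r).Adj (f₁ i) (f₁ (i + 1)) := by
    intro i hi
    refine (fromRel_adj ..).mpr ⟨?_, .inl (.inl ⟨i, hi, Nat.mod_eq_of_lt hi, rfl⟩)⟩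
    simp only [f₁, ne_eq, Fin.ext_iff, Nat.mod_eq_of_lt hi, Nat.add_one_mod_of_lt hi]
    split_ifs <;> omega
  have adj₂ : ∀ i < 2 * r + 1, (gluedCycles q r).Adj (f₂ i) (f₂ (i + 1)) := by
    intro i hi
    refine (fromRel_adj ..).mpr ⟨?_, .inl (.inr ⟨i, hi, by simp [f₂, Nat.mod_eq_of_lt hi], rfl⟩)⟩
    simp only [f₂, ne_eq, Fin.ext_iff, Nat.mod_eq_of_lt hi, Nat.add_one_mod_of_lt hi, embC]
    grind
  obtain ⟨p₁, hlen₁, hsupp₁⟩ := exists_walk_of_adj_succ f₁ (2 * q) adj₁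
  obtain ⟨p₂, hlen₂, hsupp₂⟩ := exists_walk_of_adj_succ f₂ (2 * r + 1) adj₂
  have h₁ : f₁ (2 * q) = f₁ 0 := by simp [f₁]
  have h₂ : f₂ (2 * r + 1) = f₁ 0 := by simp [f₁, f₂, embC]
  have h₂' : f₂ 0 = f₁ 0 := by simp [f₁, f₂, embC]
  refine ⟨f₁ 0, p₁.copy rfl h₁, p₂.copy h₂' h₂, by simpa, by simpa, fun w => ?_⟩
  simp only [Walk.support_copy]
  by_cases hw : w.val < 2 * q
  · left
    convert hsupp₁ w (by omega)
    ext
    simp [f₁, Nat.mod_eq_of_lt hw]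
  · right
    convert hsupp₂ (w - 2 * q + 1) (by omega)
    ext
    simp only [f₂, embC, Nat.mod_eq_of_lt (show w - 2 * q + 1 < 2 * r + 1 by omega)]
    grind

namespace Matrix.IsHermitian

variable {n : Type*} [Fintype n] [DecidableEq n] {A : Matrix n n ℝ} (hA : A.IsHermitian)

theorem sum_eigenvectorBasis_mul_eigenvectorBasis (v w : n) :
    ∑ i, hA.eigenvectorBasis i v * hA.eigenvectorBasis i w = if v = w then 1 else 0 := by
  simpa [mul_apply, one_apply] using
    congrFun₂ (Unitary.coe_mul_star_self hA.eigenvectorUnitary) v w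

theorem sum_eigenvectorBasis_sq (i : n) : ∑ v, hA.eigenvectorBasis i v ^ 2 = 1 := by
  simpa [mul_apply, sq] using congrFun₂ (Unitary.coe_star_mul_self hA.eigenvectorUnitary) i i

theorem pow_apply (m : ℕ) (v w : n) :
    (A ^ m) v w =
      ∑ i, hA.eigenvalues i ^ m * (hA.eigenvectorBasis i v * hA.eigenvectorBasis i w) := by
  conv_lhs => rw [hA.spectral_theorem, ← map_pow, diagonal_pow]
  simp only [Unitary.conjStarAlgAut_apply, mul_apply, diagonal_apply, mul_ite, mul_zero,
    sum_ite_eq', mem_univ, if_true, eigenvectorUnitary_apply, RCLike.ofReal_real_eq_id,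
    CompTriple.comp_eq, Pi.pow_apply, star_apply, star_trivial]
  exact sum_congr rfl fun i _ => by ring

/-- The `v`-th diagonal entry of the part of `A ^ m` spanned by the eigenvectors indexed by `I`. -/
noncomputable def powDiagOn (I : Finset n) (m : ℕ) (v : n) : ℝ :=
  ∑ i ∈ I, hA.eigenvalues i ^ m * hA.eigenvectorBasis i v ^ 2

theorem powDiagOn_univ (m : ℕ) (v : n) : hA.powDiagOn univ m v = (A ^ m) v v := by
  simp [powDiagOn, hA.pow_apply, sq]

theorem sum_powDiagOn (I : Finset n) (m : ℕ) :
    ∑ v, hA.powDiagOn I m v = ∑ i ∈ I, hA.eigenvalues i ^ m := by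
  simp only [powDiagOn]
  rw [sum_comm]
  simp [← mul_sum, sum_eigenvectorBasis_sq]

theorem sum_powDiagOn_sq_le (I : Finset n) (m : ℕ) :
    ∑ v, hA.powDiagOn I m v ^ 2 ≤ ∑ i ∈ I, hA.eigenvalues i ^ (2 * m) := by
  have hweights (v : n) : ∑ i ∈ I, hA.eigenvectorBasis i v ^ 2 ≤ 1 :=
    calc ∑ i ∈ I, hA.eigenvectorBasis i v ^ 2 ≤ ∑ i, hA.eigenvectorBasis i v ^ 2 :=
          sum_le_univ_sum_of_nonneg fun i => sq_nonneg _
      _ = 1 := by simpa [sq] using hA.sum_eigenvectorBasis_mul_eigenvectorBasis v v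
  calc ∑ v, hA.powDiagOn I m v ^ 2
      ≤ ∑ v, ∑ i ∈ I, (hA.eigenvalues i ^ m) ^ 2 * hA.eigenvectorBasis i v ^ 2 :=
        sum_le_sum fun v _ => sq_sum_mul_le_sum_sq_mul I _ (fun _ _ => sq_nonneg _) (hweights v)
    _ = ∑ i ∈ I, hA.eigenvalues i ^ (2 * m) := by
        rw [sum_comm]
        simp [← mul_sum, sum_eigenvectorBasis_sq, ← pow_mul, mul_comm m]

theorem sum_powDiagOn_mul_le {I : Finset n} {lam : ℝ} (hlam : 0 ≤ lam)
    (hI : ∀ i ∈ I, |hA.eigenvalues i| ≤ lam) {k l : ℕ} (hk : 1 ≤ k) (hl : 1 ≤ l) :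
    ∑ v, hA.powDiagOn I k v * hA.powDiagOn I l v ≤
      lam ^ (k + l - 2) * ∑ i ∈ I, hA.eigenvalues i ^ 2 := by
  set S := ∑ i ∈ I, hA.eigenvalues i ^ 2
  have hsq {m : ℕ} (hm : 1 ≤ m) : ∑ v, hA.powDiagOn I m v ^ 2 ≤ lam ^ (2 * m - 2) * S :=
    (hA.sum_powDiagOn_sq_le I m).trans <| (le_abs_self _).trans <|
      abs_sum_pow_le_mul_sum_sq I _ hI (by omega)
  calc ∑ v, hA.powDiagOn I k v * hA.powDiagOn I l v
      ≤ √(∑ v, hA.powDiagOn I k v ^ 2) * √(∑ v, hA.powDiagOn I l v ^ 2) :=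
        Real.sum_mul_le_sqrt_mul_sqrt _ _ _
    _ ≤ √(lam ^ (2 * k - 2) * S) * √(lam ^ (2 * l - 2) * S) := by
        gcongr
        exacts [hsq hk, hsq hl]
    _ = lam ^ (k + l - 2) * S := by
        rw [← Real.sqrt_mul (by positivity),
          ← Real.sqrt_sq (by positivity : 0 ≤ lam ^ (k + l - 2) * S)]
        congr 1
        rw [mul_pow, ← pow_mul, show (k + l - 2) * 2 = (2 * k - 2) + (2 * l - 2) by omega, pow_add]
        ring

theorem eigenvectorBasis_sq_eq_inv_card {c : ℝ} (hc : A *ᵥ (fun _ => 1) = fun _ => c) {i₀ : n}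
    (hsimple : ∀ i ≠ i₀, hA.eigenvalues i ≠ c) (v : n) :
    hA.eigenvectorBasis i₀ v ^ 2 = (Fintype.card n : ℝ)⁻¹ := by
  set s : n → ℝ := fun i => ∑ w, hA.eigenvectorBasis i w
  -- `s i` is the inner product with the all-ones vector, an eigenvector for `c`
  have hs (i : n) (hi : i ≠ i₀) : s i = 0 := by
    have hAT : (fun _ => (1 : ℝ)) ᵥ* A = fun _ => c := by
      rw [← hc, ← vecMul_transpose, ← conjTranspose_eq_transpose_of_trivial, hA.eq]
    have h : hA.eigenvalues i * s i = c * s i := by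
      calc hA.eigenvalues i * s i = (fun _ => 1) ⬝ᵥ (A *ᵥ hA.eigenvectorBasis i) := by
            simp [hA.mulVec_eigenvectorBasis, dotProduct, s, mul_sum]
        _ = c * s i := by
            rw [dotProduct_mulVec, hAT]
            simp [dotProduct, s, mul_sum]
    by_contra hne
    exact hsimple i hi (mul_right_cancel₀ hne h)
  have hone (w : n) : hA.eigenvectorBasis i₀ w * s i₀ = 1 := by
    calc hA.eigenvectorBasis i₀ w * s i₀ = ∑ i, hA.eigenvectorBasis i w * s i := by
          rw [Fintype.sum_eq_single i₀ fun i hi => by rw [hs i hi, mul_zero]]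
      _ = ∑ x, ∑ i, hA.eigenvectorBasis i w * hA.eigenvectorBasis i x := by
          simp only [s, mul_sum]
          exact sum_comm
      _ = 1 := by simp [sum_eigenvectorBasis_mul_eigenvectorBasis]
  have hcard : (Fintype.card n : ℝ) = s i₀ ^ 2 := by
    calc (Fintype.card n : ℝ) = ∑ w, (hA.eigenvectorBasis i₀ w * s i₀) ^ 2 := by simp [hone]
      _ = s i₀ ^ 2 := by simp only [mul_pow, ← sum_mul, sum_eigenvectorBasis_sq, one_mul]
  rw [hcard]
  exact eq_inv_of_mul_eq_one_left (by rw [← mul_pow, hone v, one_pow])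

end Matrix.IsHermitian

namespace SimpleGraph.IsRegularOfDegree

open Matrix

variable {V : Type*} [Fintype V] [DecidableEq V] {Γ : SimpleGraph V} [DecidableRel Γ.Adj] {d : ℕ}
  (hd : Γ.IsRegularOfDegree d) (hA : (Γ.adjMatrix ℝ).IsHermitian)
include hd hA

theorem sum_eigenvalues_sq : ∑ i, hA.eigenvalues i ^ 2 = Fintype.card V * d := by
  rw [← hA.sum_powDiagOn univ 2]
  simp only [hA.powDiagOn_univ, sq, adjMatrix_mul_self_apply_self, hd.degree_eq, sum_const,
    card_univ, nsmul_eq_mul]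

theorem sum_adjMatrix_pow_mul_le_of_abs_le {lam : ℝ} (hlam : 0 ≤ lam)
    (hμ : ∀ i, |hA.eigenvalues i| ≤ lam) {k l : ℕ} (hk : 1 ≤ k) (hl : 1 ≤ l) :
    ∑ v, (Γ.adjMatrix ℝ ^ k) v v * (Γ.adjMatrix ℝ ^ l) v v ≤
      lam ^ (k + l - 2) * (Fintype.card V * d) := by
  simpa only [hA.powDiagOn_univ, hd.sum_eigenvalues_sq hA] using
    hA.sum_powDiagOn_mul_le (I := univ) hlam (fun i _ => hμ i) hk hl

theorem sum_adjMatrix_pow_mul_le_of_lt {i₀ : V} (h₀ : hA.eigenvalues i₀ = d) {lam : ℝ}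
    (hlam : 0 ≤ lam) (hμ : ∀ i ≠ i₀, |hA.eigenvalues i| ≤ lam) (hlam_lt : lam < d)
    {k l : ℕ} (hk : 2 ≤ k) (hl : 2 ≤ l) :
    ∑ v, (Γ.adjMatrix ℝ ^ k) v v * (Γ.adjMatrix ℝ ^ l) v v ≤
      (d : ℝ) ^ (k + l) / Fintype.card V + lam ^ (k - 2) * (d : ℝ) ^ (l + 1) +
        lam ^ (l - 2) * (d : ℝ) ^ (k + 1) + lam ^ (k + l - 2) * (Fintype.card V * d) := by
  set n : ℝ := (Fintype.card V : ℝ)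
  set I := univ.erase i₀
  have hn : 0 < n := by simpa [n] using Fintype.card_pos_iff.mpr ⟨i₀⟩
  have hI : ∀ i ∈ I, |hA.eigenvalues i| ≤ lam := fun i hi => hμ i (ne_of_mem_erase hi)
  have hc : Γ.adjMatrix ℝ *ᵥ (fun _ => 1) = fun _ => (d : ℝ) := funext fun v => by
    simpa using adjMatrix_mulVec_const_apply_of_regular (a := (1 : ℝ)) hd (v := v)
  have hflat : ∀ v, hA.eigenvectorBasis i₀ v ^ 2 = n⁻¹ :=
    hA.eigenvectorBasis_sq_eq_inv_card hc
      fun i hi hi' => by linarith [hμ i hi, le_abs_self (hA.eigenvalues i)]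
  have hsplit (m : ℕ) (v : V) : (Γ.adjMatrix ℝ ^ m) v v = d ^ m / n + hA.powDiagOn I m v := by
    rw [← hA.powDiagOn_univ, IsHermitian.powDiagOn, ← add_sum_erase _ _ (mem_univ i₀), h₀, hflat,
      div_eq_mul_inv]
    rfl
  have hS : ∑ i ∈ I, hA.eigenvalues i ^ 2 ≤ n * d :=
    (sum_le_univ_sum_of_nonneg fun _ => sq_nonneg _).trans_eq (hd.sum_eigenvalues_sq hA)
  have hcross (a m : ℕ) (hm : 2 ≤ m) :
      d ^ a / n * ∑ v, hA.powDiagOn I m v ≤ lam ^ (m - 2) * d ^ (a + 1) := by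
    calc d ^ a / n * ∑ v, hA.powDiagOn I m v ≤ d ^ a / n * (lam ^ (m - 2) * (n * d)) := by
          rw [hA.sum_powDiagOn]
          gcongr
          exact (le_abs_self _).trans ((abs_sum_pow_le_mul_sum_sq I _ hI hm).trans (by gcongr))
      _ = lam ^ (m - 2) * d ^ (a + 1) := by field_simp; ring
  have hmain := hA.sum_powDiagOn_mul_le hlam hI (k := k) (l := l) (by omega) (by omega)
  calc ∑ v, (Γ.adjMatrix ℝ ^ k) v v * (Γ.adjMatrix ℝ ^ l) v v
      = n * (d ^ k / n * (d ^ l / n)) + d ^ l / n * ∑ v, hA.powDiagOn I k v +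
          d ^ k / n * ∑ v, hA.powDiagOn I l v +
          ∑ v, hA.powDiagOn I k v * hA.powDiagOn I l v := by
        simp only [hsplit, add_mul, mul_add, sum_add_distrib, ← mul_sum, ← sum_mul, sum_const,
          card_univ, nsmul_eq_mul, n]
        ring
    _ ≤ _ := by
        gcongr ?_ + ?_ + ?_ + ?_
        · exact le_of_eq (by field_simp; ring)
        · exact hcross l k hk
        · exact hcross k l hl
        · exact hmain.trans (by gcongr)

theorem sum_adjMatrix_pow_even_mul_odd_le {i₀ : V} (h₀ : hA.eigenvalues i₀ = d) {lam : ℝ}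
    (hlam : 0 ≤ lam) (hμ : ∀ i ≠ i₀, |hA.eigenvalues i| ≤ lam) {q r : ℕ} (hq : 1 ≤ q)
    (hr : 1 ≤ r) :
    ∑ v, (Γ.adjMatrix ℝ ^ (2 * q)) v v * (Γ.adjMatrix ℝ ^ (2 * r + 1)) v v ≤
      (d : ℝ) ^ (2 * (q + r) + 1) / Fintype.card V + lam ^ (2 * q - 2) * (d : ℝ) ^ (2 * r + 2) +
        lam * (d : ℝ) ^ (2 * (q + r)) + lam ^ (2 * (q + r) - 1) * d * Fintype.card V := by
  rcases le_or_gt (d : ℝ) lam with hdlam | hlamd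
  · have hμ' (i : V) : |hA.eigenvalues i| ≤ lam := by
      by_cases hi : i = i₀
      · rwa [hi, h₀, Nat.abs_cast]
      · exact hμ i hi
    have h := hd.sum_adjMatrix_pow_mul_le_of_abs_le hA hlam hμ' (k := 2 * q) (l := 2 * r + 1)
      (by omega) (by omega)
    rw [show 2 * q + (2 * r + 1) - 2 = 2 * (q + r) - 1 by omega] at h
    have : 0 ≤ (d : ℝ) ^ (2 * (q + r) + 1) / Fintype.card V +
        lam ^ (2 * q - 2) * (d : ℝ) ^ (2 * r + 2) + lam * (d : ℝ) ^ (2 * (q + r)) := by positivity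
    linarith
  · have hd₁ : (1 : ℝ) ≤ d := Nat.one_le_cast.mpr (by exact_mod_cast hlam.trans_lt hlamd)
    have h := hd.sum_adjMatrix_pow_mul_le_of_lt hA h₀ hlam hμ hlamd (k := 2 * q) (l := 2 * r + 1)
      (by omega) (by omega)
    rw [show 2 * q + (2 * r + 1) = 2 * (q + r) + 1 by ring,
      show 2 * (q + r) + 1 - 2 = 2 * (q + r) - 1 by omega] at h
    have hodd : lam ^ (2 * r + 1 - 2) * (d : ℝ) ^ (2 * q + 1) ≤ lam * (d : ℝ) ^ (2 * (q + r)) :=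
      calc lam ^ (2 * r + 1 - 2) * (d : ℝ) ^ (2 * q + 1)
          = lam * (lam ^ (2 * r - 2) * (d : ℝ) ^ (2 * q + 1)) := by
            rw [← mul_assoc, ← pow_succ', show 2 * r - 2 + 1 = 2 * r + 1 - 2 by omega]
        _ ≤ lam * ((d : ℝ) ^ (2 * r - 2) * (d : ℝ) ^ (2 * q + 1)) := by gcongr
        _ = lam * (d : ℝ) ^ (2 * (q + r) - 1) := by
            rw [← pow_add, show 2 * r - 2 + (2 * q + 1) = 2 * (q + r) - 1 by omega]
        _ ≤ lam * (d : ℝ) ^ (2 * (q + r)) := by gcongr; omega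
    linarith

end SimpleGraph.IsRegularOfDegree

/-- Lemma 2.3 (counting degenerate odd cycles): homomorphism count of `C_{2q}` and `C_{2r+1}`
glued at a vertex. -/
theorem glued_cycles_hom_upper_bound (V : Type) [Fintype V] [DecidableEq V]
    (Γ : SimpleGraph V) [DecidableRel Γ.Adj] (n d : ℕ) (lam : ℝ)
    (hn : Fintype.card V = n) (hΓ : IsNDLGraph Γ d lam) (q r : ℕ) (hq : 1 ≤ q) (hr : 1 ≤ r) :
    (homCount (gluedCycles q r) Γ : ℝ) ≤
      (d : ℝ) ^ (2 * (q + r) + 1) / n + lam ^ (2 * q - 2) * (d : ℝ) ^ (2 * r + 2) +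
        lam * (d : ℝ) ^ (2 * (q + r)) + lam ^ (2 * (q + r) - 1) * d * n := by
  obtain ⟨hd, hA, i₀, h₀, hμ⟩ := hΓ
  subst hn
  obtain ⟨x, p₁, p₂, hlen₁, hlen₂, hcover⟩ := exists_covering_closed_walks_gluedCycles hq hr
  rcases Nat.eq_zero_or_pos d with rfl | hd₀
  · have hno (v w : V) : ¬Γ.Adj v w := fun h => by
      simpa [hd.degree_eq] using (Γ.degree_pos_iff_exists_adj v).mpr ⟨w, h⟩
    rw [homCount_eq_zero_of_adj (p₁.adj_getVert_succ (by omega : 0 < p₁.length)) hno]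
    simp [zero_pow (show 2 * (q + r) ≠ 0 by omega)]
  obtain ⟨w, hw⟩ := (Γ.degree_pos_iff_exists_adj i₀).mp (hd.degree_eq i₀ ▸ hd₀)
  have hlam : 0 ≤ lam := (abs_nonneg _).trans (hμ w (Γ.ne_of_adj hw).symm)
  calc (homCount (gluedCycles q r) Γ : ℝ)
      ≤ ∑ v, (Γ.adjMatrix ℝ ^ (2 * q)) v v * (Γ.adjMatrix ℝ ^ (2 * r + 1)) v v := by
        simpa only [hlen₁, hlen₂] using homCount_le_sum_adjMatrix_pow_mul Γ p₁ p₂ hcover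
    _ ≤ _ := hd.sum_adjMatrix_pow_even_mul_odd_le hA h₀ hlam hμ hq hr
end

section
/- Let X be a finite nonempty set, let H be a graph with e(H) edges, let γ : X² → {0,1} be symmetric, and let g : X² → ℝ be symmetric with 0 ≤ g ≤ γ pointwise. Set f := 2g − γ. Then t_H(g) + t_H(γ − g) = (1/2)^{e(H)−1} · ( t_H(γ) + Σ_{J ∈ E₊(H)} E[⟨f,γ⟩_H^J] ). -/
open Finset SimpleGraph

/-- For a symmetric function `f : X → X → ℝ` and a vertex map `x`, the induced well-defined
weight of an unordered pair (edge) of vertices. -/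
noncomputable def symEdgeWeight {X : Type} {m : ℕ} (f : X → X → ℝ)
    (hf : ∀ a b, f a b = f b a) (x : Fin m → X) : Sym2 (Fin m) → ℝ :=
  Sym2.lift ⟨fun a b => f (x a) (x b), fun a b => hf (x a) (x b)⟩

/-- `t_H(f)`: the homomorphism density of the graph `H` (on vertex set `Fin m`) in the
symmetric weight function `f : X → X → ℝ`, i.e. `E[∏_{ij ∈ E(H)} f(x_i, x_j)]` for independent
uniform random vertices `x₁, …, x_m ∈ X`. -/
noncomputable def homDensity {X : Type} [Fintype X] {m : ℕ} (H : SimpleGraph (Fin m))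
    [DecidableRel H.Adj] (f : X → X → ℝ) (hf : ∀ a b, f a b = f b a) : ℝ :=
  (∑ x : Fin m → X, ∏ e ∈ H.edgeFinset, symEdgeWeight f hf x e) / (Fintype.card X : ℝ) ^ m

/-- `E[⟨f₁,f₂⟩_H^J]`: the expectation of `∏_{ij ∈ J} f₁(x_i,x_j) · ∏_{ij ∈ E(H)∖J} f₂(x_i,x_j)`
over independent uniform random vertices `x₁, …, x_m ∈ X`. -/
noncomputable def mixedMoment {X : Type} [Fintype X] {m : ℕ} (H : SimpleGraph (Fin m))
    [DecidableRel H.Adj] (J : Finset (Sym2 (Fin m))) (f₁ f₂ : X → X → ℝ)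
    (h₁ : ∀ a b, f₁ a b = f₁ b a) (h₂ : ∀ a b, f₂ a b = f₂ b a) : ℝ :=
  (∑ x : Fin m → X, (∏ e ∈ J, symEdgeWeight f₁ h₁ x e) *
      ∏ e ∈ H.edgeFinset \ J, symEdgeWeight f₂ h₂ x e) / (Fintype.card X : ℝ) ^ m

/-!
Writing `f = 2g - γ`, we have `g = (γ + f)/2` and `γ - g = (γ - f)/2` edgewise. Expanding both
products over the edges of `H` gives sums over edge sets `J` of `± ∏_J f ∏_{E∖J} γ`, with sign
`(-1)^|J|` in the second one; adding them, the terms with `|J|` odd cancel and those with `|J|` even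
double. The term `J = ∅` is `∏ γ`. This holds pointwise for every vertex map `x`, so it survives
averaging over `x`.
-/

section ProdExpansion

variable {α K : Type*} [DecidableEq α]

theorem Finset.prod_add_add_prod_sub [CommRing K] (E : Finset α) (f γ : α → K) :
    (∏ e ∈ E, (γ e + f e)) + ∏ e ∈ E, (γ e - f e) =
      2 * ∑ J ∈ E.powerset with Even J.card, (∏ e ∈ J, f e) * ∏ e ∈ E \ J, γ e := by
  have hsub : ∏ e ∈ E, (γ e - f e) =
      ∑ J ∈ E.powerset, (-1) ^ J.card * ((∏ e ∈ J, f e) * ∏ e ∈ E \ J, γ e) := by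
    simp_rw [sub_eq_neg_add, prod_add, prod_neg, mul_assoc]
  simp_rw [add_comm (γ _), prod_add, hsub, ← sum_add_distrib, sum_filter, mul_sum]
  refine sum_congr rfl fun J _ => ?_
  rcases J.card.even_or_odd with h | h
  · rw [h.neg_one_pow, if_pos h]; ring
  · rw [h.neg_one_pow, if_neg (Nat.not_even_iff_odd.mpr h)]; ring

theorem Finset.sum_powerset_filter_even [AddCommMonoid K] (E : Finset α)
    (φ : Finset α → K) :
    ∑ J ∈ E.powerset with Even J.card, φ J =
      φ ∅ + ∑ J ∈ E.powerset with Even J.card ∧ J.Nonempty, φ J := by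
  have hempty : ∅ ∈ E.powerset.filter (fun J => Even J.card) := by simp
  rw [← add_sum_erase _ _ hempty]
  congr 1
  refine sum_congr (ext fun J => ?_) fun _ _ => rfl
  simp [nonempty_iff_ne_empty, and_comm, and_assoc]

theorem Finset.prod_add_prod_sub_eq_half_pow_mul [Field K] [NeZero (2 : K)] (E : Finset α)
    (g γ : α → K) :
    (∏ e ∈ E, g e) + ∏ e ∈ E, (γ e - g e) =
      (1 / 2 : K) ^ ((E.card : ℤ) - 1) *
        ((∏ e ∈ E, γ e) +
          ∑ J ∈ E.powerset with Even J.card ∧ J.Nonempty,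
            (∏ e ∈ J, (2 * g e - γ e)) * ∏ e ∈ E \ J, γ e) := by
  have h2 : (2 : K) ≠ 0 := two_ne_zero
  set f := fun e => 2 * g e - γ e
  have hg : ∏ e ∈ E, g e = 2⁻¹ ^ #E * ∏ e ∈ E, (γ e + f e) := by
    rw [← prod_const, ← prod_mul_distrib]
    exact prod_congr rfl fun e _ => by field_simp; ring
  have hγg : ∏ e ∈ E, (γ e - g e) = 2⁻¹ ^ #E * ∏ e ∈ E, (γ e - f e) := by
    rw [← prod_const, ← prod_mul_distrib]
    exact prod_congr rfl fun e _ => by field_simp; ring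
  have hpow : (1 / 2 : K) ^ ((#E : ℤ) - 1) = 2⁻¹ ^ #E * 2 := by
    rw [zpow_sub₀ (one_div_ne_zero h2), zpow_natCast, zpow_one, one_div, div_inv_eq_mul]
  calc (∏ e ∈ E, g e) + ∏ e ∈ E, (γ e - g e)
      = 2⁻¹ ^ #E * ((∏ e ∈ E, (γ e + f e)) + ∏ e ∈ E, (γ e - f e)) := by rw [hg, hγg, mul_add]
    _ = 2⁻¹ ^ #E * 2 * ∑ J ∈ E.powerset with Even J.card, (∏ e ∈ J, f e) * ∏ e ∈ E \ J, γ e := by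
      rw [prod_add_add_prod_sub, mul_assoc]
    _ = _ := by
      rw [hpow, sum_powerset_filter_even, prod_empty, one_mul, sdiff_empty]

end ProdExpansion

theorem symEdgeWeight_map₂ {X : Type} {m : ℕ} (φ : ℝ → ℝ → ℝ) {f₁ f₂ : X → X → ℝ}
    (h₁ : ∀ a b, f₁ a b = f₁ b a) (h₂ : ∀ a b, f₂ a b = f₂ b a)
    (h : ∀ a b, φ (f₁ a b) (f₂ a b) = φ (f₁ b a) (f₂ b a)) (x : Fin m → X) (e : Sym2 (Fin m)) :
    symEdgeWeight (fun a b => φ (f₁ a b) (f₂ a b)) h x e =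
      φ (symEdgeWeight f₁ h₁ x e) (symEdgeWeight f₂ h₂ x e) := by
  induction e using Sym2.ind
  rfl

/-- Identity (3.1): for `f = 2g - γ` with `0 ≤ g ≤ γ` and `γ` a symmetric `{0,1}`-valued
function, `t_H(g) + t_H(γ - g) = (1/2)^{e(H)-1} (t_H(γ) + Σ_{J ∈ E₊(H)} E[⟨f,γ⟩_H^J])`. -/
theorem density_cancellation_identity (X : Type) [Fintype X]
    (m : ℕ) (H : SimpleGraph (Fin m)) [DecidableRel H.Adj] (γ g : X → X → ℝ)
    (hγs : ∀ a b, γ a b = γ b a)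
    (hgs : ∀ a b, g a b = g b a) :
    homDensity H g hgs +
        homDensity H (fun a b => γ a b - g a b) (fun a b => by simp only [hγs a b, hgs a b]) =
      ((1 : ℝ) / 2) ^ ((H.edgeFinset.card : ℤ) - 1) *
        (homDensity H γ hγs +
          ∑ J ∈ H.edgeFinset.powerset.filter (fun J => Even J.card ∧ J.Nonempty),
            mixedMoment H J (fun a b => 2 * g a b - γ a b) γ
              (fun a b => by simp only [hγs a b, hgs a b]) hγs) := by
  simp only [homDensity, mixedMoment, ← add_div, ← sum_add_distrib,
    symEdgeWeight_map₂ (fun a b : ℝ => a - b) hγs hgs,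
    symEdgeWeight_map₂ (fun a b : ℝ => 2 * a - b) hgs hγs, prod_add_prod_sub_eq_half_pow_mul]
  rw [← mul_sum, mul_div_assoc, sum_add_distrib, add_div, sum_comm, sum_div, sum_div]
end

section
/- Let X be a finite nonempty set, let γ : X² → {0,1} be symmetric, let f : X² → ℝ be symmetric with |f(x,y)| ≤ γ(x,y) for all x, y ∈ X, let k ≥ 1 be an integer, let p > 0, and let 0 < z ≤ 1. Define T₀ = T₁ = 0 and, for 2 ≤ m ≤ 2k, T_m := (pz)^{2k−m} · Σ_J E[⟨f, zγ⟩_{P_m}^J], where P_m is the path with vertices 1,…,m+1 and edges {i,i+1}, and the sum runs over all J ⊆ E(P_m) with |J| even that contain both the edge {1,2} and the edge {m,m+1}. Then Σ_{i=1}^{2k} (2k+1−i)·T_i ≥ 0. -/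
open Finset

/-- `E[⟨f₁,f₂⟩_{P_m}^J]` for the path `P_m` with vertices `1,…,m+1` and edges `{i,i+1}`:
the expectation, over independent uniform random `x : Fin (m+1) → X`, of the product of
`f₁` over the edges indexed by `J` and of `f₂` over the remaining edges. -/
noncomputable def pathMoment {X : Type} [Fintype X] (m : ℕ) (J : Finset (Fin m))
    (f₁ f₂ : X → X → ℝ) : ℝ :=
  (∑ x : Fin (m + 1) → X, ∏ i : Fin m,
      (if i ∈ J then f₁ (x i.castSucc) (x i.succ) else f₂ (x i.castSucc) (x i.succ))) /
    (Fintype.card X : ℝ) ^ (m + 1)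

/-!
Write `F`, `G` for the matrices of `f` and `z γ`, `n = |X|`, `c = p z` and `N = 2k - 2`.
Expanding the product over the edges of the path,
`∑_{J ⊇ {first, last}} σ^|J| E[⟨f, zγ⟩^J_{P_m}]` equals
`n^{-(m+1)} 1ᵀ σF (σF + G)^{m-2} σF 1`,
and averaging over `σ = ±1` keeps exactly the even `J`. So the weighted sum is
`½ n⁻³ ∑_{P ∈ {F + G, G - F}} vᵀ ψ(P / n) v` with `v = F 1` and
`ψ = rampPoly N c = ∑_{j ≤ N} (N + 1 - j) c^(N-j) X^j`. As `(x - c)² ψ(x)` is the gap between the even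
power `x^(N+2)` and its tangent line at `c`, `ψ ≥ 0` on `ℝ`, and the functional calculus makes
`ψ(P / n)` positive semidefinite for the symmetric matrices `P`.
-/

open Matrix Polynomial

section SubsetSums

variable {ι R : Type*} [Fintype ι] [DecidableEq ι] [CommSemiring R]

theorem sum_prod_ite_mem (a b : ι → R) :
    ∑ J : Finset ι, ∏ i, (if i ∈ J then a i else b i) = ∏ i, (a i + b i) := by
  rw [Fintype.prod_add]
  refine sum_congr rfl fun J _ => ?_
  rw [prod_ite, filter_mem_eq_inter, ← sdiff_eq_filter, univ_inter, compl_eq_univ_sdiff]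

theorem pow_card_mul_prod_ite_mem (σ : R) (J : Finset ι) (a b : ι → R) :
    σ ^ #J * ∏ i, (if i ∈ J then a i else b i)
      = ∏ i, (if i ∈ J then σ * a i else b i) := by
  rw [← prod_const, ← Fintype.prod_ite_mem, ← prod_mul_distrib]
  refine prod_congr rfl fun i _ => ?_
  split_ifs <;> simp

theorem sum_ite_subset_pow_card_mul_prod (S : Finset ι) (σ : R) (a b : ι → R) :
    ∑ J : Finset ι, (if S ⊆ J then σ ^ #J * ∏ i, (if i ∈ J then a i else b i) else 0)
      = ∏ i, (if i ∈ S then σ * a i else σ * a i + b i) := by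
  have hsplit : ∀ i, (if i ∈ S then σ * a i else σ * a i + b i)
      = σ * a i + if i ∈ S then 0 else b i := fun i => by split_ifs <;> simp
  simp only [hsplit, ← sum_prod_ite_mem]
  refine sum_congr rfl fun J _ => ?_
  split_ifs with hSJ
  · rw [pow_card_mul_prod_ite_mem]
    refine prod_congr rfl fun i _ => ?_
    split_ifs with hJ hS <;> first | rfl | exact absurd (hSJ hS) hJ
  · obtain ⟨i, hiS, hiJ⟩ := not_subset.mp hSJ
    exact (prod_eq_zero (mem_univ i) (by simp [hiS, hiJ])).symm

end SubsetSums

theorem two_mul_sum_filter_even {β R : Type*} [CommRing R] (s : Finset β) (κ : β → ℕ)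
    (g : β → R) :
    2 * ∑ x ∈ s with Even (κ x), g x = ∑ x ∈ s, (1 + (-1) ^ κ x) * g x := by
  rw [sum_filter, mul_sum]
  refine sum_congr rfl fun x _ => ?_
  rcases Nat.even_or_odd (κ x) with h | h
  · rw [if_pos h, h.neg_one_pow]
    ring
  · rw [if_neg (Nat.not_even_iff_odd.mpr h), h.neg_one_pow]
    ring

theorem prod_ofFn_ite_ends {M : Type*} [Monoid M] (A B : M) (n : ℕ) :
    (List.ofFn fun i : Fin (n + 2) =>
      if i ∈ ({0, Fin.last (n + 1)} : Finset _) then A else B).prod = A * B ^ n * A := by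
  rw [List.ofFn_succ, List.ofFn_succ', List.prod_cons, List.prod_concat]
  have hmid : ∀ j : Fin n, j.castSucc.succ ∉ ({0, Fin.last (n + 1)} : Finset _) := by
    simp [Fin.ext_iff, Fin.is_lt, Nat.ne_of_lt]
  simp [hmid, List.ofFn_const, mul_assoc]

section Walks

variable {X : Type*} [Fintype X] [DecidableEq X]

theorem sum_walk_eq_dotProduct_mulVec {R : Type*} [CommSemiring R] :
    ∀ (m : ℕ) (M : Fin m → Matrix X X R) (u w : X → R),
    ∑ x : Fin (m + 1) → X,
        u (x 0) * (∏ i : Fin m, M i (x i.castSucc) (x i.succ)) * w (x (Fin.last m))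
      = u ⬝ᵥ ((List.ofFn M).prod *ᵥ w)
  | 0, M, u, w => by
    simp [dotProduct, ← (Equiv.funUnique (Fin 1) X).symm.sum_comp]
  | m + 1, M, u, w => by
    rw [← (Fin.consEquiv fun _ => X).sum_comp, Fintype.sum_prod_type, sum_comm]
    simp only [Fin.consEquiv_apply, Fin.prod_univ_succ, Fin.cons_zero, Fin.castSucc_zero,
      ← Fin.succ_castSucc, Fin.cons_succ, ← Fin.succ_last]
    rw [List.ofFn_succ, List.prod_cons, ← mulVec_mulVec, dotProduct_mulVec,
      ← sum_walk_eq_dotProduct_mulVec m]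
    refine sum_congr rfl fun y _ => ?_
    simp only [vecMul, dotProduct, sum_mul, mul_assoc]

theorem sum_subset_ends_pow_card_mul_sum_walk (n : ℕ) (σ : ℝ) (F G : Matrix X X ℝ) :
    ∑ J : Finset (Fin (n + 2)), (if {0, Fin.last (n + 1)} ⊆ J then σ ^ #J *
        ∑ x : Fin (n + 3) → X, ∏ i : Fin (n + 2),
          (if i ∈ J then F (x i.castSucc) (x i.succ) else G (x i.castSucc) (x i.succ)) else 0)
      = σ ^ 2 * ((1 ᵥ* F) ⬝ᵥ ((σ • F + G) ^ n *ᵥ (F *ᵥ 1))) := by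
  have hwalk := sum_walk_eq_dotProduct_mulVec (n + 2)
    (fun i => if i ∈ ({0, Fin.last (n + 1)} : Finset _) then σ • F else σ • F + G) 1 1
  rw [prod_ofFn_ite_ends] at hwalk
  have hentry : ∀ (i : Fin (n + 2)) (a b : X),
      (if i ∈ ({0, Fin.last (n + 1)} : Finset _) then σ • F else σ • F + G) a b
        = if i ∈ ({0, Fin.last (n + 1)} : Finset _) then σ * F a b else σ * F a b + G a b :=
    fun i a b => by split_ifs <;> rfl
  simp only [Pi.one_apply, one_mul, mul_one, hentry] at hwalk
  calc _ = ∑ x : Fin (n + 3) → X, ∑ J : Finset (Fin (n + 2)),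
          (if {0, Fin.last (n + 1)} ⊆ J then σ ^ #J * ∏ i : Fin (n + 2),
            (if i ∈ J then F (x i.castSucc) (x i.succ) else G (x i.castSucc) (x i.succ))
          else 0) := by
        rw [sum_comm]
        refine sum_congr rfl fun J _ => ?_
        split_ifs <;> simp [mul_sum]
    _ = 1 ⬝ᵥ ((σ • F * (σ • F + G) ^ n * σ • F) *ᵥ 1) := by
        simp only [sum_ite_subset_pow_card_mul_prod, hwalk]
    _ = _ := by
        simp only [Matrix.smul_mul, Matrix.mul_smul, smul_mulVec, dotProduct_smul,
          ← mulVec_mulVec, dotProduct_mulVec, smul_eq_mul]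
        ring

end Walks

theorem sum_filter_even_ends_pathMoment {X : Type} [Fintype X] [DecidableEq X] (n : ℕ)
    (f g : X → X → ℝ) :
    ∑ J ∈ (univ : Finset (Finset (Fin (n + 2)))).filter
        (fun J => Even #J ∧ 0 ∈ J ∧ Fin.last (n + 1) ∈ J), pathMoment (n + 2) J f g
      = 2⁻¹ * ((Fintype.card X : ℝ) ^ (n + 3))⁻¹ *
        ((1 ᵥ* of f) ⬝ᵥ ((of f + of g) ^ n *ᵥ (of f *ᵥ 1))
          + (1 ᵥ* of f) ⬝ᵥ ((of g - of f) ^ n *ᵥ (of f *ᵥ 1))) := by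
  simp only [pathMoment, ← sum_div]
  set W : Finset (Fin (n + 2)) → ℝ := fun J => ∑ x : Fin (n + 3) → X, ∏ i : Fin (n + 2),
    (if i ∈ J then f (x i.castSucc) (x i.succ) else g (x i.castSucc) (x i.succ))
  have hends : ∀ σ : ℝ, ∑ J : Finset (Fin (n + 2)),
      (if {0, Fin.last (n + 1)} ⊆ J then σ ^ #J * W J else 0)
        = σ ^ 2 * ((1 ᵥ* of f) ⬝ᵥ ((σ • of f + of g) ^ n *ᵥ (of f *ᵥ 1))) :=
    fun σ => sum_subset_ends_pow_card_mul_sum_walk n σ (of f) (of g)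
  have hfilter : (univ : Finset (Finset (Fin (n + 2)))).filter
        (fun J => Even #J ∧ 0 ∈ J ∧ Fin.last (n + 1) ∈ J)
      = (univ.filter fun J => {0, Fin.last (n + 1)} ⊆ J).filter fun J => Even #J := by
    ext J
    simp [insert_subset_iff, and_comm]
  have htwice : 2 * ∑ J ∈ (univ : Finset (Finset (Fin (n + 2)))).filter
        (fun J => Even #J ∧ 0 ∈ J ∧ Fin.last (n + 1) ∈ J), W J
      = (1 ᵥ* of f) ⬝ᵥ ((of f + of g) ^ n *ᵥ (of f *ᵥ 1))
          + (1 ᵥ* of f) ⬝ᵥ ((of g - of f) ^ n *ᵥ (of f *ᵥ 1)) := by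
    calc _ = ∑ J ∈ univ.filter fun J => {0, Fin.last (n + 1)} ⊆ J, (1 + (-1) ^ #J) * W J := by
          rw [hfilter, two_mul_sum_filter_even]
      _ = ∑ J : Finset (Fin (n + 2)), (if {0, Fin.last (n + 1)} ⊆ J then 1 ^ #J * W J else 0)
          + ∑ J : Finset (Fin (n + 2)),
            (if {0, Fin.last (n + 1)} ⊆ J then (-1) ^ #J * W J else 0) := by
          rw [sum_filter, ← sum_add_distrib]
          refine sum_congr rfl fun J _ => ?_
          split_ifs <;> ring
      _ = _ := by
          rw [hends, hends, neg_one_smul, neg_add_eq_sub, one_smul]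
          ring
  rw [div_eq_mul_inv]
  linear_combination (2⁻¹ * ((Fintype.card X : ℝ) ^ (n + 3))⁻¹) * htwice

theorem mul_pow_mul_le_pow_add_mul_pow {n : ℕ} (hn : Odd n) (c x : ℝ) :
    (n + 1) * c ^ n * x ≤ x ^ (n + 1) + n * c ^ (n + 1) := by
  have heven : Even (n + 1) := hn.add_one
  have hbern := pow_add_mul_le_add_pow (abs_nonneg c) (a := |c|) (b := |x| - |c|)
    (by linarith [abs_nonneg x, abs_nonneg c]) (n + 1)
  rw [add_sub_cancel, Nat.add_sub_cancel, pow_succ] at hbern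
  have hcx : (n + 1) * (c ^ n * x) ≤ (n + 1) * (|c| ^ n * |x|) :=
    mul_le_mul_of_nonneg_left (by simpa only [abs_mul, abs_pow] using le_abs_self (c ^ n * x))
      (by positivity)
  rw [← heven.pow_abs x, ← heven.pow_abs c, pow_succ |c|]
  push_cast at hbern
  linarith

noncomputable def rampPoly (N : ℕ) (c : ℝ) : ℝ[X] :=
  ∑ j ∈ range (N + 1), C (((N + 1 - j : ℕ) : ℝ) * c ^ (N - j)) * X ^ j

theorem eval_rampPoly (N : ℕ) (c x : ℝ) :
    (rampPoly N c).eval x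
      = ∑ j ∈ range (N + 1), ((N + 1 - j : ℕ) : ℝ) * c ^ (N - j) * x ^ j := by
  simp [rampPoly, eval_finsetSum]

theorem eval_rampPoly_succ (N : ℕ) (c x : ℝ) :
    (rampPoly (N + 1) c).eval x = x * (rampPoly N c).eval x + (N + 2) * c ^ (N + 1) := by
  rw [eval_rampPoly, eval_rampPoly, sum_range_succ', mul_sum]
  congr 1
  · refine sum_congr rfl fun j _ => ?_
    rw [show N + 1 + 1 - (j + 1) = N + 1 - j by omega, show N + 1 - (j + 1) = N - j by omega]
    ring
  · push_cast
    ring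

theorem sub_sq_mul_eval_rampPoly (N : ℕ) (c x : ℝ) :
    (x - c) ^ 2 * (rampPoly N c).eval x
      = x ^ (N + 2) + (N + 1) * c ^ (N + 2) - (N + 2) * c ^ (N + 1) * x := by
  induction N with
  | zero =>
    simp only [eval_rampPoly, zero_add, sum_range_one, Nat.sub_zero, Nat.cast_one, pow_zero]
    ring
  | succ N ih =>
    rw [eval_rampPoly_succ, mul_add, mul_left_comm, ih]
    push_cast
    ring

theorem eval_rampPoly_nonneg {N : ℕ} (hN : Even N) (c x : ℝ) : 0 ≤ (rampPoly N c).eval x := by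
  rcases eq_or_ne x c with rfl | hxc
  · rw [eval_rampPoly]
    refine sum_nonneg fun j hj => ?_
    rw [mul_assoc, ← pow_add, Nat.sub_add_cancel (Nat.lt_succ_iff.mp (mem_range.mp hj))]
    exact mul_nonneg (Nat.cast_nonneg _) (hN.pow_nonneg x)
  · refine (mul_nonneg_iff_of_pos_left (by positivity : 0 < (x - c) ^ 2)).mp ?_
    have htangent := mul_pow_mul_le_pow_add_mul_pow hN.add_one c x
    rw [sub_sq_mul_eval_rampPoly]
    push_cast at htangent
    linarith

theorem Matrix.IsHermitian.posSemidef_aeval {n : Type*} [Fintype n] [DecidableEq n]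
    {R : Matrix n n ℝ} (hR : R.IsHermitian) {q : ℝ[X]} (hq : ∀ x, 0 ≤ q.eval x) :
    (aeval R q).PosSemidef := by
  open scoped MatrixOrder in
  rw [← nonneg_iff_posSemidef, ← cfc_polynomial q R hR.isSelfAdjoint]
  exact cfc_nonneg fun x _ => hq x

theorem dotProduct_aeval_rampPoly_smul_mulVec {n : Type*} [Fintype n] [DecidableEq n]
    (N : ℕ) (c t : ℝ) (P : Matrix n n ℝ) (v : n → ℝ) :
    v ⬝ᵥ (aeval (t • P) (rampPoly N c) *ᵥ v)
      = ∑ j ∈ range (N + 1),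
          ((N + 1 - j : ℕ) : ℝ) * c ^ (N - j) * t ^ j * (v ⬝ᵥ (P ^ j *ᵥ v)) := by
  rw [rampPoly, map_sum, sum_mulVec, dotProduct_sum]
  refine sum_congr rfl fun j _ => ?_
  rw [map_mul, aeval_C, aeval_X_pow, ← Algebra.smul_def, _root_.smul_pow, smul_mulVec,
    smul_mulVec, dotProduct_smul, dotProduct_smul, smul_eq_mul, smul_eq_mul]
  ring

theorem sum_rampPoly_coeff_mul_dotProduct_pow_mulVec_nonneg {n : Type*} [Fintype n]
    [DecidableEq n] {N : ℕ} (hN : Even N) (c t : ℝ) {P : Matrix n n ℝ} (hP : P.IsSymm)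
    (v : n → ℝ) :
    0 ≤ ∑ j ∈ range (N + 1),
      ((N + 1 - j : ℕ) : ℝ) * c ^ (N - j) * t ^ j * (v ⬝ᵥ (P ^ j *ᵥ v)) := by
  rw [← dotProduct_aeval_rampPoly_smul_mulVec]
  simpa using ((isHermitian_iff_isSymm.mpr (hP.smul t)).posSemidef_aeval
    (eval_rampPoly_nonneg hN c)).dotProduct_mulVec_nonneg v

theorem sum_Icc_one_eq_sum_range_add {M : Type*} [AddCommMonoid M] (N : ℕ) (g : ℕ → M) :
    ∑ i ∈ Icc 1 (N + 2), g i = ∑ j ∈ range (N + 1), g (j + 2) + g 1 := by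
  rw [← sum_range_succ' (fun i => g (i + 1)), range_eq_Ico, sum_Ico_add', zero_add,
    Ico_add_one_right_eq_Icc]

/-- The final step in the proof of Lemma 3.4: the weighted sum of the quantities `T_m`
is nonnegative. -/
theorem weighted_T_sum_nonneg (X : Type) [Fintype X] (γ f : X → X → ℝ)
    (hγs : ∀ a b, γ a b = γ b a)
    (hfs : ∀ a b, f a b = f b a)
    (k : ℕ) (hk : 1 ≤ k) (p z : ℝ)
    (T : ℕ → ℝ) (hT1 : T 1 = 0)
    (hTm : ∀ m, ∀ _ : 2 ≤ m, ∀ _ : m ≤ 2 * k,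
      T m = (p * z) ^ (2 * k - m) *
        ∑ J ∈ (Finset.univ : Finset (Finset (Fin m))).filter
            (fun J => Even J.card ∧ (⟨0, by omega⟩ : Fin m) ∈ J ∧ (⟨m - 1, by omega⟩ : Fin m) ∈ J),
          pathMoment m J f (fun a b => z * γ a b)) :
    0 ≤ ∑ i ∈ Finset.Icc 1 (2 * k), ((2 * k + 1 - i : ℕ) : ℝ) * T i := by
  classical
  obtain ⟨N, hN⟩ : ∃ N, 2 * k = N + 2 := ⟨2 * k - 2, by omega⟩
  set F : Matrix X X ℝ := of f
  set G : Matrix X X ℝ := of fun a b => z * γ a b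
  set v : X → ℝ := F *ᵥ 1
  set t : ℝ := (Fintype.card X : ℝ)⁻¹
  have hF : F.IsSymm := IsSymm.ext fun a b => hfs b a
  have hG : G.IsSymm := IsSymm.ext fun a b => by simp [G, hγs b a]
  have hv : 1 ᵥ* F = v := by rw [← mulVec_transpose, hF.eq]
  have hT : ∀ j ∈ range (N + 1), ((N + 2 + 1 - (j + 2) : ℕ) : ℝ) * T (j + 2)
      = 2⁻¹ * t ^ 3 *
        (((N + 1 - j : ℕ) : ℝ) * (p * z) ^ (N - j) * t ^ j * (v ⬝ᵥ ((F + G) ^ j *ᵥ v))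
          + ((N + 1 - j : ℕ) : ℝ) * (p * z) ^ (N - j) * t ^ j * (v ⬝ᵥ ((G - F) ^ j *ᵥ v))) := by
    intro j hj
    have hjN : j ≤ N := Nat.lt_succ_iff.mp (mem_range.mp hj)
    rw [hTm (j + 2) (by omega) (by omega), show 2 * k - (j + 2) = N - j by omega,
      show N + 2 + 1 - (j + 2) = N + 1 - j by omega]
    -- `hTm` names the end edges `⟨0, _⟩` and `⟨j + 2 - 1, _⟩`: only defeq to `0`, `Fin.last (j + 1)`
    erw [sum_filter_even_ends_pathMoment]
    rw [hv, ← inv_pow, pow_add]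
    ring
  have hNeven : Even N := ⟨k - 1, by omega⟩
  rw [hN, sum_Icc_one_eq_sum_range_add, hT1, mul_zero, add_zero, sum_congr rfl hT, ← mul_sum,
    sum_add_distrib]
  exact mul_nonneg (by positivity)
    (add_nonneg (sum_rampPoly_coeff_mul_dotProduct_pow_mulVec_nonneg hNeven _ t (hF.add hG) v)
      (sum_rampPoly_coeff_mul_dotProduct_pow_mulVec_nonneg hNeven _ t (hG.sub hF) v))
end
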